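/- With u := ι(b̄_1)···ι(b̄_n) and ρ := (1/2) Σ_{j=1}^n [b_j,b̄_j], one has (1/4)(Θ·u − (−1)^n u·Θ) = (1/2)(ι(ρ)·u + (−1)^n u·ι(ρ)) in Cl(g,κ). -/

import Mathlib

/-!
Write `e_k = B k`, `e^k = B k.swap` for the dual basis, `Θ' = 6Θ`, and `X = Σ_j [b_j, b̄_j] = 2ρ`.
If `ι(l̄)` kills `w` from the left (as it kills `u`, since `l̄` is totally isotropic), then
`ι(x) w = Σ_k κ(x, e_k) ι(e^k) w` for every `x`: the components of `x` along `l̄` are invisible.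
By invariance this collapses the last factor of `Θ'`, so `Θ' w = Σ_{i,j} ι(e^i) ι(e^j) ι([e_i,e_j]) w`.
Moving the remaining `ι(b̄_a)` across to `w` and using that `[l̄, l̄] ⊆ l̄` leaves `Θ' w = 6 ι(X) w`.
The coefficients of `Θ'` are totally antisymmetric, so reversion sends `Θ'` to `-Θ'`; applying it to
the identity for the reversed product `reverse u` gives `u Θ' = -6 u ι(X)`.
-/

namespace CliffordAlgebra

variable {R M : Type*} [CommRing R] [AddCommGroup M] [Module R M] {Q : QuadraticForm R M}

theorem ι_mul_prod_map_ι_eq_zero {l : List M} (hQ : ∀ x ∈ l, Q x = 0)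
    (hpolar : ∀ x ∈ l, ∀ y ∈ l, QuadraticMap.polar Q x y = 0) {m : M} (hm : m ∈ l) :
    ι Q m * (l.map (ι Q)).prod = 0 := by
  induction l with
  | nil => simp at hm
  | cons x l ih =>
    rw [List.map_cons, List.prod_cons, ← mul_assoc]
    rcases List.mem_cons.mp hm with rfl | hm
    · rw [ι_sq_scalar, hQ m List.mem_cons_self, map_zero, zero_mul]
    · have ih' := ih (fun y hy => hQ y (List.mem_cons_of_mem x hy))
        (fun y hy z hz => hpolar y (List.mem_cons_of_mem x hy) z (List.mem_cons_of_mem x hz)) hm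
      rw [ι_mul_ι_comm, hpolar m (List.mem_cons_of_mem x hm) x List.mem_cons_self, map_zero,
        zero_sub, neg_mul, mul_assoc, ih', mul_zero, neg_zero]

theorem prod_map_ι_mul_eq_zero {l : List M} (hQ : ∀ x ∈ l, Q x = 0)
    (hpolar : ∀ x ∈ l, ∀ y ∈ l, QuadraticMap.polar Q x y = 0) {m : M} (hm : m ∈ l) :
    (l.map (ι Q)).prod * ι Q m = 0 := by
  have h := ι_mul_prod_map_ι_eq_zero (l := l.reverse) (by simpa using hQ) (by simpa using hpolar)
    (List.mem_reverse.mpr hm)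
  rw [List.map_reverse, ← reverse_prod_map_ι, ← reverse_ι m, ← reverse.map_mul] at h
  exact reverse_involutive.injective (h.trans (map_zero reverse).symm)

theorem ι_mul_ι_mul_of_ι_mul_eq_zero {a : M} {w : CliffordAlgebra Q} (hw : ι Q a * w = 0)
    (x : M) : ι Q a * (ι Q x * w) = QuadraticMap.polar Q a x • w := by
  rw [← mul_assoc, ι_mul_ι_comm, sub_mul, mul_assoc (ι Q x), hw, mul_zero, sub_zero,
    Algebra.smul_def]

theorem ι_mul_ι_mul_ι_mul_of_ι_mul_eq_zero {a : M} {w : CliffordAlgebra Q}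
    (hw : ι Q a * w = 0) (x y : M) :
    ι Q a * (ι Q x * (ι Q y * w)) =
      QuadraticMap.polar Q a x • (ι Q y * w) - QuadraticMap.polar Q a y • (ι Q x * w) := by
  rw [← mul_assoc, ι_mul_ι_comm, sub_mul, mul_assoc (ι Q x), ι_mul_ι_mul_of_ι_mul_eq_zero hw,
    mul_smul_comm]
  simp only [Algebra.smul_def]

end CliffordAlgebra

open CliffordAlgebra

namespace LinearMap.BilinForm

variable {R g : Type*} [CommRing R] [LieRing g] [LieAlgebra R g] {κ : LinearMap.BilinForm R g}

theorem apply_lie_cyclic (hsymm : ∀ a b : g, κ a b = κ b a)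
    (hinv : ∀ a b c : g, κ ⁅a, b⁆ c = κ a ⁅b, c⁆) (x y z : g) : κ x ⁅y, z⁆ = κ y ⁅z, x⁆ := by
  rw [← hinv y, hsymm]

theorem apply_lie_swap (hinv : ∀ a b c : g, κ ⁅a, b⁆ c = κ a ⁅b, c⁆) (x y z : g) :
    κ x ⁅y, z⁆ = -κ y ⁅x, z⁆ := by
  rw [← hinv, ← hinv, ← lie_skew, map_neg, LinearMap.neg_apply]

theorem polar_toQuadraticMap_of_symm (hsymm : ∀ a b : g, κ a b = κ b a) (x y : g) :
    QuadraticMap.polar κ.toQuadraticMap x y = 2 * κ x y := by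
  rw [LinearMap.BilinMap.polar_toQuadraticMap, hsymm y x, two_mul]

variable {I : Type*} [Fintype I]

variable (κ) in
def cubicElement (e f : I → g) : CliffordAlgebra κ.toQuadraticMap :=
  ∑ i, ∑ j, ∑ k, κ (e i) ⁅e j, e k⁆ •
    (ι κ.toQuadraticMap (f i) * ι κ.toQuadraticMap (f j) * ι κ.toQuadraticMap (f k))

theorem reverse_cubicElement (hsymm : ∀ a b : g, κ a b = κ b a)
    (hinv : ∀ a b c : g, κ ⁅a, b⁆ c = κ a ⁅b, c⁆) (e f : I → g) :
    reverse (cubicElement κ e f) = -cubicElement κ e f := by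
  have hanti : ∀ i j k, κ (e k) ⁅e j, e i⁆ = -κ (e i) ⁅e j, e k⁆ := fun i j k => by
    rw [apply_lie_cyclic hsymm hinv, apply_lie_swap hinv]
  simp only [cubicElement, map_sum, map_smul, reverse.map_mul, reverse_ι]
  rw [Finset.sum_comm]
  refine (Finset.sum_congr rfl fun j _ => Finset.sum_comm).trans ?_
  rw [Finset.sum_comm]
  simp only [← Finset.sum_neg_distrib]
  refine Finset.sum_congr rfl fun k _ => Finset.sum_congr rfl fun j _ =>
    Finset.sum_congr rfl fun i _ => ?_
  rw [hanti, neg_smul, mul_assoc]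

theorem cubicElement_mul_eq_sum (hinv : ∀ a b c : g, κ ⁅a, b⁆ c = κ a ⁅b, c⁆)
    {e f : I → g} {w : CliffordAlgebra κ.toQuadraticMap}
    (hexp : ∀ x, ι _ x * w = ∑ k, κ x (e k) • (ι _ (f k) * w)) :
    cubicElement κ e f * w = ∑ i, ∑ j, ι _ (f i) * (ι _ (f j) * (ι _ ⁅e i, e j⁆ * w)) := by
  simp only [cubicElement, Finset.sum_mul]
  refine Finset.sum_congr rfl fun i _ => Finset.sum_congr rfl fun j _ => ?_
  simp only [hexp ⁅e i, e j⁆, Finset.mul_sum, hinv, smul_mul_assoc, mul_smul_comm, mul_assoc]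

section PolarizedBasis

variable [DecidableEq I] {B : Module.Basis (I ⊕ I) R g}
  {w : CliffordAlgebra κ.toQuadraticMap}

theorem ι_mul_eq_sum_of_ι_inr_mul_eq_zero
    (hpair : ∀ i j, κ (B (.inl i)) (B (.inr j)) = if i = j then 1 else 0)
    (hbbiso : ∀ i j, κ (B (.inr i)) (B (.inr j)) = 0)
    (hw : ∀ p, ι _ (B (.inr p)) * w = 0) (x : g) :
    ι _ x * w = ∑ j, κ x (B (.inr j)) • (ι _ (B (.inl j)) * w) := by
  have key : LinearMap.mulRight R w ∘ₗ ι κ.toQuadraticMap =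
      ∑ j, (κ.flip (B (.inr j))).smulRight (ι _ (B (.inl j)) * w) := by
    refine B.ext fun k => ?_
    cases k <;> simp [hpair, hbbiso, hw]
  simpa using LinearMap.congr_fun key x

theorem ι_mul_eq_sum_dual_of_ι_inr_mul_eq_zero
    (hpair : ∀ i j, κ (B (.inl i)) (B (.inr j)) = if i = j then 1 else 0)
    (hbbiso : ∀ i j, κ (B (.inr i)) (B (.inr j)) = 0)
    (hw : ∀ p, ι _ (B (.inr p)) * w = 0) (x : g) :
    ι _ x * w = ∑ k, κ x (B k) • (ι _ (B k.swap) * w) := by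
  simp [Fintype.sum_sum_type, hw, ι_mul_eq_sum_of_ι_inr_mul_eq_zero hpair hbbiso hw x]

theorem cubicElement_mul_of_ι_inr_mul_eq_zero (hsymm : ∀ a b : g, κ a b = κ b a)
    (hinv : ∀ a b c : g, κ ⁅a, b⁆ c = κ a ⁅b, c⁆)
    (hpair : ∀ i j, κ (B (.inl i)) (B (.inr j)) = if i = j then 1 else 0)
    (hbbiso : ∀ i j, κ (B (.inr i)) (B (.inr j)) = 0)
    (hsub : ∀ i j, ⁅B (.inr i), B (.inr j)⁆ ∈ Submodule.span R (Set.range fun i => B (.inr i)))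
    (hw : ∀ p, ι _ (B (.inr p)) * w = 0) :
    cubicElement κ B (fun k => B k.swap) * w =
      (6 : R) • (ι _ (∑ j, ⁅B (.inl j), B (.inr j)⁆) * w) := by
  set X := ∑ j, ⁅B (.inl j), B (.inr j)⁆
  have hexp := ι_mul_eq_sum_of_ι_inr_mul_eq_zero hpair hbbiso hw
  have hdual := ι_mul_eq_sum_dual_of_ι_inr_mul_eq_zero hpair hbbiso hw
  have hspan : ∀ x ∈ Submodule.span R (Set.range fun i => B (.inr i)), ι _ x * w = 0 :=
    fun x hx => (Submodule.span_le (p := LinearMap.ker (LinearMap.mulRight R w ∘ₗ ι _))).mpr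
      (Set.range_subset_iff.mpr hw) hx
  have hpolar := polar_toQuadraticMap_of_symm hsymm
  have hleft : ∀ a, ∑ k, ι _ (B (.inr a)) * (ι _ (B k.swap) * (ι _ ⁅B (.inl a), B k⁆ * w)) =
      (4 : R) • (ι _ ⁅B (.inl a), B (.inr a)⁆ * w) := by
    intro a
    simp only [ι_mul_ι_mul_ι_mul_of_ι_mul_eq_zero (hw a), Finset.sum_sub_distrib, hpolar, mul_smul,
      ← Finset.smul_sum, ← hinv (B (.inr a)), ← hdual]
    have hfirst : ∑ k, κ (B (.inr a)) (B k.swap) • (ι _ ⁅B (.inl a), B k⁆ * w) =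
        ι _ ⁅B (.inl a), B (.inr a)⁆ * w := by
      simp [Fintype.sum_sum_type, hbbiso, hsymm (B (.inr a)), hpair]
    rw [hfirst, ← lie_skew, map_neg, neg_mul]
    module
  have hright : ∀ a, ∑ k, ι _ (B (.inl a)) * (ι _ (B k.swap) * (ι _ ⁅B (.inr a), B k⁆ * w)) =
      (2 * κ X (B (.inr a))) • (ι _ (B (.inl a)) * w) := by
    intro a
    have hcoef : ∑ c, κ (B (.inr c)) ⁅B (.inr a), B (.inl c)⁆ = κ X (B (.inr a)) := by
      simp only [X, map_sum, LinearMap.sum_apply]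
      refine Finset.sum_congr rfl fun c _ => ?_
      rw [apply_lie_cyclic hsymm hinv, hsymm]
    rw [Fintype.sum_sum_type]
    simp only [Sum.swap_inl, Sum.swap_inr, ι_mul_ι_mul_of_ι_mul_eq_zero (hw _), hspan _ (hsub a _),
      mul_zero, Finset.sum_const_zero, add_zero, mul_smul_comm, hpolar, ← Finset.sum_smul,
      ← Finset.mul_sum, hcoef]
  rw [cubicElement_mul_eq_sum hinv hdual, Fintype.sum_sum_type]
  simp only [Sum.swap_inl, Sum.swap_inr, hleft, hright, mul_smul, ← Finset.smul_sum, ← hexp,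
    ← Finset.sum_mul, ← map_sum]
  module

theorem mul_cubicElement_of_mul_ι_inr_eq_zero (hsymm : ∀ a b : g, κ a b = κ b a)
    (hinv : ∀ a b c : g, κ ⁅a, b⁆ c = κ a ⁅b, c⁆)
    (hpair : ∀ i j, κ (B (.inl i)) (B (.inr j)) = if i = j then 1 else 0)
    (hbbiso : ∀ i j, κ (B (.inr i)) (B (.inr j)) = 0)
    (hsub : ∀ i j, ⁅B (.inr i), B (.inr j)⁆ ∈ Submodule.span R (Set.range fun i => B (.inr i)))
    (hw : ∀ p, w * ι _ (B (.inr p)) = 0) :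
    w * cubicElement κ B (fun k => B k.swap) =
      -((6 : R) • (w * ι _ (∑ j, ⁅B (.inl j), B (.inr j)⁆))) := by
  have h := congrArg reverse <| cubicElement_mul_of_ι_inr_mul_eq_zero hsymm hinv hpair hbbiso hsub
    (w := reverse w) fun p => by simpa using congrArg reverse (hw p)
  rw [reverse.map_mul, reverse_cubicElement hsymm hinv, reverse_reverse, mul_neg] at h
  rw [← neg_eq_iff_eq_neg]
  simpa using h

end PolarizedBasis

end LinearMap.BilinForm

open LinearMap.BilinForm

open CliffordAlgebra in
theorem statement6_general (g : Type*) [LieRing g] [LieAlgebra ℂ g]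
    (κ : LinearMap.BilinForm ℂ g)
    (hsymm : ∀ a b : g, κ a b = κ b a)
    (hinv : ∀ a b c : g, κ ⁅a, b⁆ c = κ a ⁅b, c⁆)
    (n : ℕ) (B : Module.Basis (Fin n ⊕ Fin n) ℂ g)
    (b bb : Fin n → g)
    (hb : ∀ i, b i = B (Sum.inl i)) (hbb : ∀ i, bb i = B (Sum.inr i))
    (hbbiso : ∀ i j, κ (bb i) (bb j) = 0)
    (hpair : ∀ i j, κ (b i) (bb j) = if i = j then (1 : ℂ) else 0)
    (hsubalgbar : ∀ i j, ⁅bb i, bb j⁆ ∈ Submodule.span ℂ (Set.range bb))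
    (Θ : CliffordAlgebra (LinearMap.BilinMap.toQuadraticMap κ))
    (hΘ : Θ = (6 : ℂ)⁻¹ •
      ∑ i : Fin n ⊕ Fin n, ∑ j : Fin n ⊕ Fin n, ∑ k : Fin n ⊕ Fin n,
        κ (B i) ⁅B j, B k⁆ •
          (ι (LinearMap.BilinMap.toQuadraticMap κ) (B i.swap) *
            ι (LinearMap.BilinMap.toQuadraticMap κ) (B j.swap) *
            ι (LinearMap.BilinMap.toQuadraticMap κ) (B k.swap)))
    (u : CliffordAlgebra (LinearMap.BilinMap.toQuadraticMap κ))
    (hu : u = ((List.finRange n).map fun j =>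
      ι (LinearMap.BilinMap.toQuadraticMap κ) (bb j)).prod)
    (ρ : g) (hρ : ρ = (2 : ℂ)⁻¹ • ∑ j : Fin n, ⁅b j, bb j⁆) :
    (4 : ℂ)⁻¹ • (Θ * u - ((-1 : ℂ) ^ n) • (u * Θ)) =
      (2 : ℂ)⁻¹ • (ι (LinearMap.BilinMap.toQuadraticMap κ) ρ * u +
        ((-1 : ℂ) ^ n) • (u * ι (LinearMap.BilinMap.toQuadraticMap κ) ρ)) := by
  obtain rfl : b = fun i => B (.inl i) := funext hb
  obtain rfl : bb = fun i => B (.inr i) := funext hbb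
  have hΘ' : Θ = (6 : ℂ)⁻¹ • cubicElement κ B (fun k => B k.swap) := hΘ
  set l := (List.finRange n).map fun j => B (.inr j)
  have hu' : u = (l.map (ι κ.toQuadraticMap)).prod := by
    rw [hu, List.map_map]; rfl
  have hQ : ∀ x ∈ l, κ.toQuadraticMap x = 0 := by simp [l, hbbiso]
  have hl : ∀ x ∈ l, ∀ y ∈ l, QuadraticMap.polar κ.toQuadraticMap x y = 0 := by
    simp [l, LinearMap.BilinMap.polar_toQuadraticMap, hbbiso]
  have hmem : ∀ p, B (.inr p) ∈ l := fun p => by simp [l]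
  have hΘu := cubicElement_mul_of_ι_inr_mul_eq_zero hsymm hinv hpair hbbiso hsubalgbar
    (w := u) fun p => hu' ▸ ι_mul_prod_map_ι_eq_zero hQ hl (hmem p)
  have huΘ := mul_cubicElement_of_mul_ι_inr_eq_zero hsymm hinv hpair hbbiso hsubalgbar
    (w := u) fun p => hu' ▸ prod_map_ι_mul_eq_zero hQ hl (hmem p)
  rw [hΘ', hρ, smul_mul_assoc, hΘu, mul_smul_comm, huΘ, map_smul, smul_mul_assoc, mul_smul_comm]
  module

open CliffordAlgebra in
/-- With `u := ι(b̄_1)···ι(b̄_n)` and `ρ := (1/2) Σ_j [b_j,b̄_j]`,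
one has `(1/4)(Θ·u − (−1)^n u·Θ) = (1/2)(ι(ρ)·u + (−1)^n u·ι(ρ))` in `Cl(g,κ)`. -/
theorem statement6 (g : Type*) [LieRing g] [LieAlgebra ℂ g] [FiniteDimensional ℂ g]
    (κ : LinearMap.BilinForm ℂ g)
    (hsymm : ∀ a b : g, κ a b = κ b a)
    (hinv : ∀ a b c : g, κ ⁅a, b⁆ c = κ a ⁅b, c⁆)
    (hnd : κ.Nondegenerate)
    (n : ℕ) (B : Module.Basis (Fin n ⊕ Fin n) ℂ g)
    (b bb : Fin n → g)
    (hb : ∀ i, b i = B (Sum.inl i)) (hbb : ∀ i, bb i = B (Sum.inr i))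
    (hbiso : ∀ i j, κ (b i) (b j) = 0)
    (hbbiso : ∀ i j, κ (bb i) (bb j) = 0)
    (hpair : ∀ i j, κ (b i) (bb j) = if i = j then (1 : ℂ) else 0)
    (hsubalg : ∀ i j, ⁅b i, b j⁆ ∈ Submodule.span ℂ (Set.range b))
    (hsubalgbar : ∀ i j, ⁅bb i, bb j⁆ ∈ Submodule.span ℂ (Set.range bb))
    (Θ : CliffordAlgebra (LinearMap.BilinMap.toQuadraticMap κ))
    (hΘ : Θ = (6 : ℂ)⁻¹ •
      ∑ i : Fin n ⊕ Fin n, ∑ j : Fin n ⊕ Fin n, ∑ k : Fin n ⊕ Fin n,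
        κ (B i) ⁅B j, B k⁆ •
          (ι (LinearMap.BilinMap.toQuadraticMap κ) (B i.swap) *
            ι (LinearMap.BilinMap.toQuadraticMap κ) (B j.swap) *
            ι (LinearMap.BilinMap.toQuadraticMap κ) (B k.swap)))
    (u : CliffordAlgebra (LinearMap.BilinMap.toQuadraticMap κ))
    (hu : u = ((List.finRange n).map fun j =>
      ι (LinearMap.BilinMap.toQuadraticMap κ) (bb j)).prod)
    (ρ : g) (hρ : ρ = (2 : ℂ)⁻¹ • ∑ j : Fin n, ⁅b j, bb j⁆) :
    (4 : ℂ)⁻¹ • (Θ * u - ((-1 : ℂ) ^ n) • (u * Θ)) =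
      (2 : ℂ)⁻¹ • (ι (LinearMap.BilinMap.toQuadraticMap κ) ρ * u +
        ((-1 : ℂ) ^ n) • (u * ι (LinearMap.BilinMap.toQuadraticMap κ) ρ)) :=
  statement6_general g κ hsymm hinv n B b bb hb hbb hbbiso hpair hsubalgbar Θ hΘ u hu ρ hρ
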